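/- arXiv:1211.3443 — 3 statements merged into one kernel-verified Lean document; each statement's English description precedes it below -/
import Mathlib

section
/- For all integers a ≥ 1 and 1 ≤ n ≤ 2^a, one has v₂(C(2^a, n) · 2^{n-1}) ≥ a, with equality if and only if n = 1 or n = 2. -/
/- By Kummer's theorem, `v₂ (C(2^a, n)) = a - v₂ n` for `1 ≤ n ≤ 2^a`, so the valuation in question is
`a + (n - 1 - v₂ n)`. Since `2^(v₂ n) ≤ n`, the excess `n - 1 - v₂ n` is nonnegative, and it vanishes
only when `2^(n-1) ≤ n`, i.e. `n ≤ 2`. -/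

theorem padicValNat_choose_prime_pow_add_padicValNat {p a n : ℕ} [Fact p.Prime] (hn0 : n ≠ 0)
    (hn : n ≤ p ^ a) : padicValNat p ((p ^ a).choose n) + padicValNat p n = a := by
  have h := Nat.Prime.emultiplicity_choose_prime_pow_add_emultiplicity Fact.out hn hn0
  rwa [← padicValNat_eq_emultiplicity (Nat.choose_pos hn).ne', ← padicValNat_eq_emultiplicity hn0,
    ← Nat.cast_add, Nat.cast_inj] at h

theorem lt_two_pow_sub_one {n : ℕ} (hn : 3 ≤ n) : n < 2 ^ (n - 1) := by
  obtain ⟨m, rfl⟩ := Nat.exists_eq_add_of_le' hn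
  have hm : m < 2 ^ m := Nat.lt_two_pow_self
  rw [show m + 3 - 1 = m + 2 by omega, pow_add]
  omega

theorem two_pow_padicValNat_two_le {n : ℕ} (hn : n ≠ 0) : 2 ^ padicValNat 2 n ≤ n :=
  Nat.le_of_dvd (Nat.pos_of_ne_zero hn) pow_padicValNat_dvd

theorem padicValNat_two_le_sub_one {n : ℕ} (hn : n ≠ 0) : padicValNat 2 n ≤ n - 1 := by
  have := two_pow_padicValNat_two_le hn
  have : padicValNat 2 n < 2 ^ padicValNat 2 n := Nat.lt_two_pow_self
  omega

theorem padicValNat_two_eq_sub_one_iff {n : ℕ} (hn : n ≠ 0) :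
    padicValNat 2 n = n - 1 ↔ n = 1 ∨ n = 2 := by
  constructor
  · intro h
    have hle := two_pow_padicValNat_two_le hn
    rw [h] at hle
    by_contra! hn3
    have := lt_two_pow_sub_one (n := n) (by omega)
    omega
  · rintro (rfl | rfl) <;> simp

theorem stmt_7_general (a n : ℕ) (hn1 : 1 ≤ n) (hn2 : n ≤ 2 ^ a) :
    a ≤ padicValNat 2 ((2 ^ a).choose n * 2 ^ (n - 1)) ∧
    (padicValNat 2 ((2 ^ a).choose n * 2 ^ (n - 1)) = a ↔ n = 1 ∨ n = 2) := by
  have hn0 : n ≠ 0 := by omega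
  have hkummer := padicValNat_choose_prime_pow_add_padicValNat hn0 hn2
  have hval : padicValNat 2 ((2 ^ a).choose n * 2 ^ (n - 1)) =
      padicValNat 2 ((2 ^ a).choose n) + (n - 1) := by
    rw [padicValNat.mul (Nat.choose_pos hn2).ne' (by positivity), padicValNat.prime_pow]
  have hle := padicValNat_two_le_sub_one hn0
  rw [hval, ← padicValNat_two_eq_sub_one_iff hn0]
  omega

theorem stmt_7 (a n : ℕ) (ha : 1 ≤ a) (hn1 : 1 ≤ n) (hn2 : n ≤ 2 ^ a) :
    a ≤ padicValNat 2 ((2 ^ a).choose n * 2 ^ (n - 1)) ∧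
    (padicValNat 2 ((2 ^ a).choose n * 2 ^ (n - 1)) = a ↔ n = 1 ∨ n = 2) :=
  stmt_7_general a n hn1 hn2
end

section
/- In the ring ℤ[y₁, y₂]/(y₁² - 2y₁, y₂² - 2y₂, 2^m y₁, 2^m y₂) with m ≥ 1, the element 2^c · y₁y₂ is nonzero whenever 0 ≤ c < m. -/
/-!
Map `yᵢ ↦ 1 + eᵢ` into the group algebra `(ℤ/2^m)[(ℤ/2)²]`, where `e₁, e₂` are the two
generators of the Klein four-group. Since `eᵢ² = 1`, we get `(1 + eᵢ)² = 2(1 + eᵢ)`, and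
`2^m = 0` holds in the coefficients, so the defining relations are respected. The image of
`y₁y₂` is `(1 + e₁)(1 + e₂)`, whose coefficient at `e₁ + e₂` is `1`; hence the image of
`2^c y₁y₂` has coefficient `2^c ≠ 0` in `ℤ/2^m` there.
-/

open AddMonoidAlgebra

theorem AddMonoidAlgebra.one_add_single_sq {R G : Type*} [Semiring R] [AddMonoid G] {g : G}
    (hg : g + g = 0) : (1 + single g (1 : R)) ^ 2 = 2 * (1 + single g 1) := by
  rw [sq, add_mul, mul_add, mul_add, one_mul, mul_one, one_mul, single_mul_single, hg, mul_one,
    ← one_def, two_mul]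
  abel

theorem AddMonoidAlgebra.coeff_one_add_single_mul_one_add_single {R G : Type*} [Semiring R]
    [AddCancelMonoid G] {a b : G} (ha : a ≠ 0) (hb : b ≠ 0) (hab : a + b ≠ 0) (r s : R) :
    ((1 + single a r) * (1 + single b s)).coeff (a + b) = r * s := by
  have hb' : a ≠ a + b := by simpa using hb
  have ha' : b ≠ a + b := by simpa using ha
  simp [add_mul, mul_add, single_mul_single, one_def, ha', hb', hab.symm]

theorem ZMod.natCast_pow_ne_zero {p c m : ℕ} (hp : 1 < p) (hc : c < m) :
    ((p ^ c : ℕ) : ZMod (p ^ m)) ≠ 0 := by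
  rw [Ne, ZMod.natCast_eq_zero_iff, Nat.pow_dvd_pow_iff_le_right hp]
  omega

abbrev KleinAlgebra (m : ℕ) := AddMonoidAlgebra (ZMod (2 ^ m)) (Fin 2 → ZMod 2)

noncomputable def kleinGen (m : ℕ) (i : Fin 2) : KleinAlgebra m :=
  1 + single (Pi.single i 1) 1

theorem kleinGen_sq (m : ℕ) (i : Fin 2) : kleinGen m i ^ 2 = 2 * kleinGen m i :=
  one_add_single_sq (CharTwo.add_self_eq_zero _)

theorem KleinAlgebra.two_pow_eq_zero (m : ℕ) : (2 : KleinAlgebra m) ^ m = 0 := by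
  rw [← Nat.cast_ofNat (R := KleinAlgebra m), ← Nat.cast_pow, natCast_def, ZMod.natCast_self,
    single_zero]

theorem two_pow_mul_kleinGen_mul_kleinGen_ne_zero {m c : ℕ} (hc : c < m) :
    2 ^ c * (kleinGen m 0 * kleinGen m 1) ≠ 0 := by
  have hcoeff : (2 ^ c * (kleinGen m 0 * kleinGen m 1)).coeff (Pi.single 0 1 + Pi.single 1 1) =
      ((2 ^ c : ℕ) : ZMod (2 ^ m)) := by
    rw [← Nat.cast_ofNat (R := KleinAlgebra m), ← Nat.cast_pow, ← nsmul_eq_mul, coeff_smul_apply,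
      kleinGen, kleinGen, coeff_one_add_single_mul_one_add_single (by decide) (by decide) (by decide),
      mul_one, nsmul_one]
  intro h
  rw [h, coeff_zero, Finsupp.zero_apply] at hcoeff
  exact ZMod.natCast_pow_ne_zero one_lt_two hc hcoeff.symm

open MvPolynomial in
theorem stmt_13_general (m c : ℕ) (hc : c < m) :
    let R := MvPolynomial (Fin 2) ℤ ⧸ Ideal.span (α := MvPolynomial (Fin 2) ℤ)
      {(X 0 : MvPolynomial (Fin 2) ℤ) ^ 2 - 2 * X 0, X 1 ^ 2 - 2 * X 1,
        2 ^ m * X 0, 2 ^ m * X 1}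
    let y₁ : R := Ideal.Quotient.mk _ (X 0)
    let y₂ : R := Ideal.Quotient.mk _ (X 1)
    2 ^ c * (y₁ * y₂) ≠ 0 := by
  dsimp only
  intro h
  let φ := eval₂Hom (Int.castRingHom (KleinAlgebra m)) (kleinGen m)
  have hrel : Ideal.span {(X 0 : MvPolynomial (Fin 2) ℤ) ^ 2 - 2 * X 0, X 1 ^ 2 - 2 * X 1,
      2 ^ m * X 0, 2 ^ m * X 1} ≤ RingHom.ker φ := by
    simp only [Ideal.span_le, Set.insert_subset_iff, Set.singleton_subset_iff, SetLike.mem_coe,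
      RingHom.mem_ker]
    simp [φ, kleinGen_sq, KleinAlgebra.two_pow_eq_zero]
  rw [← map_mul, ← map_ofNat (Ideal.Quotient.mk _), ← map_pow, ← map_mul,
    Ideal.Quotient.eq_zero_iff_mem] at h
  apply two_pow_mul_kleinGen_mul_kleinGen_ne_zero hc
  simpa [φ] using hrel h

open MvPolynomial in
theorem stmt_13 (m c : ℕ) (hm : 1 ≤ m) (hc : c < m) :
    let R := MvPolynomial (Fin 2) ℤ ⧸ Ideal.span (α := MvPolynomial (Fin 2) ℤ)
      {(X 0 : MvPolynomial (Fin 2) ℤ) ^ 2 - 2 * X 0, X 1 ^ 2 - 2 * X 1,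
        2 ^ m * X 0, 2 ^ m * X 1}
    let y₁ : R := Ideal.Quotient.mk _ (X 0)
    let y₂ : R := Ideal.Quotient.mk _ (X 1)
    2 ^ c * (y₁ * y₂) ≠ 0 :=
  stmt_13_general m c hc
end

section
/- In the ring ℤ[y]/(y² - 2y, 2^{m+1}·y) with m ≥ 1, the element η = 2^{s-3}(4y³ - y⁴) (for s ≥ 3) equals 2^s·y; in particular 2·η = 2^{s+1}·y, which is zero if and only if s ≥ m. -/
open Polynomial

theorem pow_succ_eq_two_pow_mul_of_sq_eq {R : Type*} [CommRing R] {y : R} (hy : y ^ 2 = 2 * y)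
    (n : ℕ) : y ^ (n + 1) = 2 ^ n * y := by
  induction n with
  | zero => simp
  | succ n ih =>
    calc y ^ (n + 2) = 2 ^ n * y ^ 2 := by rw [pow_succ, ih]; ring
      _ = 2 ^ (n + 1) * y := by rw [hy]; ring

theorem two_pow_sub_three_mul_eq_of_sq_eq {R : Type*} [CommRing R] {y : R} (hy : y ^ 2 = 2 * y)
    {s : ℕ} (hs : 3 ≤ s) : 2 ^ (s - 3) * (4 * y ^ 3 - y ^ 4) = 2 ^ s * y := by
  obtain ⟨k, rfl⟩ := Nat.exists_eq_add_of_le' hs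
  rw [pow_succ_eq_two_pow_mul_of_sq_eq hy 2, pow_succ_eq_two_pow_mul_of_sq_eq hy 3,
    Nat.add_sub_cancel]
  ring

/-- Evaluating at `X = 2` modulo `2N` kills the ideal and sends `a * X` to `2a`. -/
theorem intCast_mul_X_mem_span_iff (N a : ℤ) :
    (a : ℤ[X]) * X ∈ Ideal.span {X ^ 2 - 2 * X, (N : ℤ[X]) * X} ↔ N ∣ a := by
  constructor
  · intro ha
    let f : ℤ[X] →+* ZMod (2 * N.natAbs) := eval₂RingHom (Int.castRingHom _) 2
    have hker : Ideal.span {X ^ 2 - 2 * X, (N : ℤ[X]) * X} ≤ RingHom.ker f := by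
      rw [Ideal.span_le]
      rintro p (rfl | rfl)
      · simp [f]
      · have h : ((N * 2 : ℤ) : ZMod (2 * N.natAbs)) = 0 := by
          rw [ZMod.intCast_zmod_eq_zero_iff_dvd, Nat.cast_mul, Int.natCast_natAbs, mul_comm]
          exact mul_dvd_mul_right (abs_dvd_self N) 2
        simpa [f] using h
    have h2a : ((2 * a : ℤ) : ZMod (2 * N.natAbs)) = 0 := by
      simpa [f, mul_comm] using RingHom.mem_ker.mp (hker ha)
    rw [ZMod.intCast_zmod_eq_zero_iff_dvd] at h2a
    push_cast at h2a
    exact (abs_dvd _ _).mp (Int.dvd_of_mul_dvd_mul_left two_ne_zero h2a)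
  · rintro ⟨k, rfl⟩
    have hNX : (N : ℤ[X]) * X ∈ Ideal.span {X ^ 2 - 2 * X, (N : ℤ[X]) * X} :=
      Ideal.subset_span (by simp)
    simpa [mul_assoc, mul_left_comm] using Ideal.mul_mem_left _ (k : ℤ[X]) hNX

open Polynomial in
theorem stmt_16_general (m s : ℕ) (hs : 3 ≤ s) :
    let R := Polynomial ℤ ⧸ (Ideal.span
      {(X : Polynomial ℤ) ^ 2 - 2 * X, 2 ^ (m + 1) * X} : Ideal (Polynomial ℤ))
    let y : R := Ideal.Quotient.mk _ X
    let η := 2 ^ (s - 3) * (4 * y ^ 3 - y ^ 4)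
    η = 2 ^ s * y ∧ 2 * η = 2 ^ (s + 1) * y ∧ (2 * η = 0 ↔ m ≤ s) := by
  intro R y η
  have hy : y ^ 2 = 2 * y := by
    have h : (X ^ 2 - 2 * X : ℤ[X]) ∈ Ideal.span {X ^ 2 - 2 * X, 2 ^ (m + 1) * X} :=
      Ideal.subset_span (by simp)
    rw [← Ideal.Quotient.eq_zero_iff_mem, map_sub, sub_eq_zero] at h
    rwa [map_pow, map_mul, map_ofNat] at h
  have hη : η = 2 ^ s * y := two_pow_sub_three_mul_eq_of_sq_eq hy hs
  have h2η : 2 * η = 2 ^ (s + 1) * y := by rw [hη]; ring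
  refine ⟨hη, h2η, ?_⟩
  have hmem := intCast_mul_X_mem_span_iff (2 ^ (m + 1)) (2 ^ (s + 1))
  push_cast at hmem
  rw [h2η, ← map_ofNat (Ideal.Quotient.mk _) 2, ← map_pow, ← map_mul,
    Ideal.Quotient.eq_zero_iff_mem, hmem, pow_dvd_pow_iff two_ne_zero (by simp [Int.isUnit_iff])]
  omega

open Polynomial in
theorem stmt_16 (m s : ℕ) (hm : 1 ≤ m) (hs : 3 ≤ s) :
    let R := Polynomial ℤ ⧸ (Ideal.span
      {(X : Polynomial ℤ) ^ 2 - 2 * X, 2 ^ (m + 1) * X} : Ideal (Polynomial ℤ))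
    let y : R := Ideal.Quotient.mk _ X
    let η := 2 ^ (s - 3) * (4 * y ^ 3 - y ^ 4)
    η = 2 ^ s * y ∧ 2 * η = 2 ^ (s + 1) * y ∧ (2 * η = 0 ↔ m ≤ s) :=
  stmt_16_general m s hs
end
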